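/- arXiv:2406.18955 — 5 statements merged into one kernel-verified Lean document; each statement's English description precedes it below -/
import Mathlib

section
/- Let a and u be positive integers with gcd(u, a) = 1, let z and w be nonzero complex numbers with w^u = z, and let G, H be polynomials over ℂ such that H is coprime to 1 - z·X^a in ℂ[X] and H(X^u) (the composition of H with X^u) is coprime to 1 - w·X^a in ℂ[X]. Suppose A and B are polynomials over ℂ with deg A < a and deg B < a satisfying A·H ≡ G (mod the ideal generated by 1 - z·X^a) and B·H(X^u) ≡ G(X^u) (mod the ideal generated by 1 - w·X^a). Then A(0) = B(0). -/
/-!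
At a root `y` of `1 - w X ^ a`, the point `y ^ u` is a root of `1 - z X ^ a` at which `H` does not
vanish, so both congruences evaluate to `B(y) = G(y ^ u) / H(y ^ u) = A(y ^ u)`. The roots of
`1 - w X ^ a` are `s ζ ^ j` with `ζ` a primitive `a`-th root of unity, and since `gcd(u, a) = 1`
their `u`-th powers `s ^ u (ζ ^ u) ^ j` again run over all roots of `1 - z X ^ a`. Averaging a
polynomial of degree `< a` over such a coset of the roots of unity returns its constant term, so
averaging `B(y) = A(y ^ u)` over `j` gives `B(0) = A(0)`.
-/

open Polynomial Finset

section CommRing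

variable {R : Type*} [CommRing R]

theorem Polynomial.eval_eq_of_sub_mem_span_singleton {p q r : R[X]} {x : R}
    (h : p - q ∈ Ideal.span {r}) (hr : r.IsRoot x) : p.eval x = q.eval x := by
  have := eval_dvd (x := x) (Ideal.mem_span_singleton.1 h)
  rwa [hr.eq_zero, zero_dvd_iff, eval_sub, sub_eq_zero] at this

theorem IsCoprime.eval_ne_zero_of_isRoot [Nontrivial R] {p q : R[X]} {x : R}
    (h : IsCoprime p q) (hq : q.IsRoot x) : p.eval x ≠ 0 := by
  have := h.map (evalRingHom x)
  rw [coe_evalRingHom, hq.eq_zero, isCoprime_zero_right] at this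
  exact this.ne_zero

theorem Polynomial.isRoot_one_sub_C_mul_X_pow {c x : R} {n : ℕ} :
    (1 - C c * X ^ n).IsRoot x ↔ c * x ^ n = 1 := by
  rw [IsRoot.def, eval_sub, eval_one, eval_mul, eval_C, eval_pow, eval_X, sub_eq_zero, eq_comm]

end CommRing

section IsDomain

variable {R : Type*} [CommRing R] [IsDomain R] {ζ : R} {n : ℕ}

theorem IsPrimitiveRoot.geom_sum_pow_eq_zero (hζ : IsPrimitiveRoot ζ n) {k : ℕ}
    (hk : 0 < k) (hkn : k < n) : ∑ i ∈ range n, (ζ ^ k) ^ i = 0 := by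
  have hsub : ζ ^ k - 1 ≠ 0 := sub_ne_zero.2 (hζ.pow_ne_one_of_pos_of_lt hk.ne' hkn)
  refine (mul_eq_zero.1 ?_).resolve_right hsub
  rw [geom_sum_mul, ← pow_mul, mul_comm, pow_mul, hζ.pow_eq_one, one_pow, sub_self]

theorem IsPrimitiveRoot.sum_eval_mul_pow (hζ : IsPrimitiveRoot ζ n) {P : R[X]}
    (hP : P.degree < n) (r : R) :
    ∑ i ∈ range n, P.eval (r * ζ ^ i) = n * P.eval 0 := by
  rcases eq_or_ne P 0 with rfl | hP0
  · simp
  have hPn : P.natDegree < n := (natDegree_lt_iff_degree_lt hP0).2 hP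
  calc ∑ i ∈ range n, P.eval (r * ζ ^ i)
      = ∑ k ∈ range n, P.coeff k * r ^ k * ∑ i ∈ range n, (ζ ^ k) ^ i := by
        simp_rw [eval_eq_sum_range' hPn, mul_sum]
        rw [sum_comm]
        exact sum_congr rfl fun k _ => sum_congr rfl fun i _ => by ring
    _ = P.coeff 0 * r ^ 0 * ∑ i ∈ range n, (ζ ^ 0) ^ i := by
        refine sum_eq_single_of_mem 0 (mem_range.2 (pos_of_gt hPn)) fun k hk hk0 => ?_
        rw [hζ.geom_sum_pow_eq_zero (pos_of_ne_zero hk0) (mem_range.1 hk), mul_zero]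
    _ = n * P.eval 0 := by simp [coeff_zero_eq_eval_zero, mul_comm]

theorem eval_eq_eval_pow_of_congr_comp_X_pow {a u : ℕ} {z w : R}
    (hwu : w ^ u = z) {G H A B : R[X]} (hH : IsCoprime H (1 - C z * X ^ a))
    (hA : A * H - G ∈ Ideal.span {1 - C z * X ^ a})
    (hB : B * H.comp (X ^ u) - G.comp (X ^ u) ∈ Ideal.span {1 - C w * X ^ a})
    {y : R} (hy : w * y ^ a = 1) : B.eval y = A.eval (y ^ u) := by
  have hyu : (1 - C z * X ^ a).IsRoot (y ^ u) := by
    rw [isRoot_one_sub_C_mul_X_pow, ← hwu, ← pow_mul, mul_comm u a, pow_mul, ← mul_pow, hy,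
      one_pow]
  have hBy := eval_eq_of_sub_mem_span_singleton hB (isRoot_one_sub_C_mul_X_pow.2 hy)
  have hAyu := eval_eq_of_sub_mem_span_singleton hA hyu
  simp only [eval_mul, eval_comp, eval_pow, eval_X] at hBy hAyu
  exact mul_right_cancel₀ (hH.eval_ne_zero_of_isRoot hyu) (hBy.trans hAyu.symm)

end IsDomain

theorem key_transformation_general (a u : ℕ) (ha : 0 < a)
    (hcop : Nat.Coprime u a) (z w : ℂ) (hw : w ≠ 0) (hwu : w ^ u = z)
    (G H A B : Polynomial ℂ)
    (hH : IsCoprime H (1 - C z * X ^ a))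
    (hAdeg : A.degree < a) (hBdeg : B.degree < a)
    (hA : A * H - G ∈ Ideal.span {1 - C z * X ^ a})
    (hB : B * H.comp (X ^ u) - G.comp (X ^ u) ∈ Ideal.span {1 - C w * X ^ a}) :
    A.eval 0 = B.eval 0 := by
  obtain ⟨ζ, hζ⟩ : ∃ ζ : ℂ, IsPrimitiveRoot ζ a := ⟨_, Complex.isPrimitiveRoot_exp a ha.ne'⟩
  obtain ⟨s, hs⟩ := IsAlgClosed.exists_pow_nat_eq w⁻¹ ha
  have hroot : ∀ j : ℕ, w * (s * ζ ^ j) ^ a = 1 := fun j => by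
    rw [mul_pow, ← pow_mul, mul_comm j a, pow_mul, hζ.pow_eq_one, one_pow, mul_one, hs,
      mul_inv_cancel₀ hw]
  refine mul_left_cancel₀ (Nat.cast_ne_zero.2 ha.ne' : (a : ℂ) ≠ 0) ?_
  rw [← (hζ.pow_of_coprime u hcop).sum_eval_mul_pow hAdeg (s ^ u), ← hζ.sum_eval_mul_pow hBdeg s]
  refine sum_congr rfl fun j _ => ?_
  rw [eval_eq_eval_pow_of_congr_comp_X_pow hwu hH hA hB (hroot j), mul_pow, ← pow_mul,
    ← pow_mul, mul_comm j u]

/-- the key transformation / multiplier identity. If `gcd(u, a) = 1`,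
`w ^ u = z`, `A` is the (degree `< a`) representative of `G / H` modulo `1 - z X ^ a`, and
`B` is the (degree `< a`) representative of `G(X^u) / H(X^u)` modulo `1 - w X ^ a`, then
`A(0) = B(0)`. -/
theorem key_transformation (a u : ℕ) (ha : 0 < a) (hu : 0 < u)
    (hcop : Nat.Coprime u a) (z w : ℂ) (hz : z ≠ 0) (hw : w ≠ 0) (hwu : w ^ u = z)
    (G H A B : Polynomial ℂ)
    (hH : IsCoprime H (1 - C z * X ^ a))
    (hHu : IsCoprime (H.comp (X ^ u)) (1 - C w * X ^ a))
    (hAdeg : A.degree < a) (hBdeg : B.degree < a)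
    (hA : A * H - G ∈ Ideal.span {1 - C z * X ^ a})
    (hB : B * H.comp (X ^ u) - G.comp (X ^ u) ∈ Ideal.span {1 - C w * X ^ a}) :
    A.eval 0 = B.eval 0 :=
  key_transformation_general a u ha hcop z w hw hwu G H A B hH hAdeg hBdeg hA hB
end

section
/- Let F be a formal power series over ℂ, let g and c be positive integers with gcd(g, c) = 1, and let n, t, k be natural numbers with t < g and n = t·c + g·k. Then the coefficient of X^n in F(X^g)·(1 - X^c)^{-1} equals the coefficient of X^k in F(X)·(1 - X^c)^{-1}, where F(X^g) denotes the substitution of X^g into F, and (1 - X^c)^{-1} is the multiplicative inverse of 1 - X^c in ℂ[[X]]. -/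
/-!
Write `(1 - X^c)⁻¹ = (1 - X^(gc))⁻¹ · ∑_{s<g} X^(sc)`. Since `(1 - X^(gc))⁻¹` is itself a series
in `X^g`, the product `F(X^g) (1 - X^c)⁻¹` becomes `H(X^g) · ∑_{s<g} X^(sc)` with
`H = F (1 - X^c)⁻¹`. The coefficient of `X^n` in the summand `H(X^g) X^(sc)` vanishes unless
`sc ≡ n ≡ tc (mod g)`, and as `c` is invertible mod `g` this leaves only `s = t`, which
contributes the coefficient of `X^k` in `H`.
-/

open PowerSeries Finset

/-- The power series `F(X^g)`. -/
noncomputable def substXPow (g : ℕ) (F : PowerSeries ℂ) : PowerSeries ℂ :=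
  PowerSeries.mk fun n => if g ∣ n then PowerSeries.coeff (n / g) F else 0

theorem substXPow_eq_expand {g : ℕ} (hg : g ≠ 0) (F : PowerSeries ℂ) :
    substXPow g F = expand g hg F := by
  ext n
  rw [substXPow, coeff_mk, coeff_expand]

theorem Nat.eq_of_mul_modEq_mul_of_coprime {g c s t : ℕ} (hcop : g.Coprime c) (hs : s < g)
    (ht : t < g) (h : s * c ≡ t * c [MOD g]) : s = t :=
  (h.cancel_right_of_coprime hcop).eq_of_lt_of_lt hs ht

namespace PowerSeries

theorem coeff_expand_mul_geom_sum {R : Type*} [CommRing R] {g c n t k : ℕ} (hg : g ≠ 0)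
    (hcop : g.Coprime c) (ht : t < g) (hn : n = t * c + g * k) (H : R⟦X⟧) :
    coeff n (expand g hg H * ∑ s ∈ range g, (X ^ c) ^ s) = coeff k H := by
  simp_rw [mul_sum, map_sum, ← pow_mul, coeff_mul_X_pow']
  rw [sum_eq_single t]
  · rw [if_pos (by rw [hn, mul_comm]; exact le_add_right le_rfl), hn, mul_comm c t,
      Nat.add_sub_cancel_left, coeff_expand_mul]
  · intro s hs hst
    split_ifs with hle
    · refine coeff_expand_of_not_dvd _ _ _ fun hdvd => hst ?_
      refine Nat.eq_of_mul_modEq_mul_of_coprime hcop (mem_range.mp hs) ht ?_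
      calc s * c ≡ n [MOD g] := by rw [mul_comm]; exact (Nat.modEq_iff_dvd' hle).mpr hdvd
        _ ≡ t * c [MOD g] := by rw [hn]; exact Nat.ModEq.symm (by simp [Nat.ModEq])
    · rfl
  · exact fun ht' => absurd (mem_range.mpr ht) ht'

section Field

variable {k : Type*} [Field k]

theorem expand_inv (p : ℕ) (hp : p ≠ 0) (φ : k⟦X⟧) : expand p hp φ⁻¹ = (expand p hp φ)⁻¹ := by
  by_cases h : constantCoeff φ = 0
  · rw [inv_eq_zero.mpr h, map_zero, eq_comm, inv_eq_zero, constantCoeff_expand, h]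
  · rw [eq_inv_iff_mul_eq_one (by rwa [constantCoeff_expand]), ← map_mul,
      PowerSeries.inv_mul_cancel _ h, map_one]

theorem inv_one_sub_eq_inv_one_sub_pow_mul_geom_sum {x : k⟦X⟧} (hx : constantCoeff x = 0)
    {g : ℕ} (hg : g ≠ 0) : (1 - x)⁻¹ = (1 - x ^ g)⁻¹ * ∑ s ∈ range g, x ^ s := by
  rw [eq_comm, eq_inv_iff_mul_eq_one (by simp [hx]), mul_assoc, mul_comm _ (1 - x),
    mul_neg_geom_sum, PowerSeries.inv_mul_cancel _ (by simp [hx, hg])]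

theorem inv_one_sub_X_pow_eq_expand_mul_geom_sum {c : ℕ} (hc : c ≠ 0) {g : ℕ} (hg : g ≠ 0) :
    (1 - X ^ c : k⟦X⟧)⁻¹ = expand g hg (1 - X ^ c)⁻¹ * ∑ s ∈ range g, (X ^ c) ^ s := by
  rw [expand_inv, map_sub, map_one, map_pow, expand_X, ← pow_mul, mul_comm g c, pow_mul]
  exact inv_one_sub_eq_inv_one_sub_pow_mul_geom_sum (by simp [hc]) hg

end Field

end PowerSeries

/-- If `gcd(g, c) = 1`, `t < g` and `n = t * c + g * k`, then the
coefficient of `X ^ n` in `F(X^g) * (1 - X^c)⁻¹` equals the coefficient of `X ^ k` in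
`F(X) * (1 - X^c)⁻¹`. -/
theorem coeff_substXPow_mul_inv (F : PowerSeries ℂ) (g c : ℕ) (hg : 0 < g) (hc : 0 < c)
    (hcop : Nat.Coprime g c) (n t k : ℕ) (ht : t < g) (hn : n = t * c + g * k) :
    PowerSeries.coeff n (substXPow g F * (1 - PowerSeries.X ^ c)⁻¹) =
      PowerSeries.coeff k (F * (1 - PowerSeries.X ^ c)⁻¹) := by
  rw [substXPow_eq_expand hg.ne']
  conv_lhs => rw [inv_one_sub_X_pow_eq_expand_mul_geom_sum hc.ne' hg.ne', ← mul_assoc, ← map_mul]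
  exact coeff_expand_mul_geom_sum hg.ne' hcop ht hn _
end

section
/- Let a, b, c be positive integers with gcd(a, b, c) = 1, and set g = gcd(a, b). Let i be a natural number with i < g and i·c ≡ n (mod g), and let n and m be integers with n = i·c + g·m. Then the number of triples (x₁, x₂, x₃) ∈ ℕ³ with a·x₁ + b·x₂ + c·x₃ = n equals the number of triples (x₁, x₂, x₃) ∈ ℕ³ with (a/g)·x₁ + (b/g)·x₂ + c·x₃ = m. -/
/-- Let `gcd(a,b,c) = 1`, `g = gcd(a,b)`, `i < g` with `i*c ≡ n (mod g)`,
and `n = i*c + g*m`. Then `d(n; a, b, c) = d(m; a/g, b/g, c)`. -/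
theorem denumerant_reduction_gcd_ab (a b c : ℕ) (ha : 0 < a) (hb : 0 < b) (hc : 0 < c)
    (habc : Nat.gcd (Nat.gcd a b) c = 1) (n m : ℤ) (i : ℕ) (hi : i < Nat.gcd a b)
    (hicong : (i * c : ℤ) ≡ n [ZMOD (Nat.gcd a b : ℤ)])
    (hnm : n = i * c + (Nat.gcd a b : ℤ) * m) :
    Nat.card {x : ℕ × ℕ × ℕ //
        (a : ℤ) * x.1 + (b : ℤ) * x.2.1 + (c : ℤ) * x.2.2 = n} =
      Nat.card {x : ℕ × ℕ × ℕ //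
        ((a / Nat.gcd a b : ℕ) : ℤ) * x.1 + ((b / Nat.gcd a b : ℕ) : ℤ) * x.2.1 +
          (c : ℤ) * x.2.2 = m} := by
  set g := Nat.gcd a b with hgdef
  have hg : 0 < g := Nat.gcd_pos_of_pos_left _ ha
  obtain ⟨a', ha'⟩ := Nat.gcd_dvd_left a b
  obtain ⟨b', hb'⟩ := Nat.gcd_dvd_right a b
  have hag : (a / g : ℕ) = a' := by rw [ha']; exact Nat.mul_div_cancel_left _ hg
  have hbg : (b / g : ℕ) = b' := by rw [hb']; exact Nat.mul_div_cancel_left _ hg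
  have haZ : (a : ℤ) = g * a' := by exact_mod_cast ha'
  have hbZ : (b : ℤ) = g * b' := by exact_mod_cast hb'
  have hcop : IsCoprime (g : ℤ) (c : ℤ) := by
    rw [Int.isCoprime_iff_gcd_eq_one]
    exact_mod_cast habc
  have hgZ : (0 : ℤ) < g := by exact_mod_cast hg
  have key : ∀ x : ℕ × ℕ × ℕ, (a : ℤ) * x.1 + (b : ℤ) * x.2.1 + (c : ℤ) * x.2.2 = n →
      x.2.2 % g = i := by
    intro x hx
    have h1 : (g : ℤ) ∣ (c : ℤ) * ((x.2.2 : ℤ) - i) := by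
      refine ⟨m - a' * x.1 - b' * x.2.1, ?_⟩
      rw [hnm, haZ, hbZ] at hx
      ring_nf
      ring_nf at hx
      linarith
    have h2 : (g : ℤ) ∣ ((x.2.2 : ℤ) - i) := hcop.dvd_of_dvd_mul_left h1
    obtain ⟨t, ht⟩ := h2
    have hig : (i : ℤ) < g := by exact_mod_cast hi
    have hx0 : (0 : ℤ) ≤ (x.2.2 : ℤ) := Int.natCast_nonneg _
    have hi0 : (0 : ℤ) ≤ (i : ℤ) := Int.natCast_nonneg _
    have ht0 : 0 ≤ t := by nlinarith
    lift t to ℕ using ht0 with t'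
    have hxe : x.2.2 = i + g * t' := by exact_mod_cast (by linarith : (x.2.2 : ℤ) = i + g * t')
    rw [hxe, Nat.add_mul_mod_self_left, Nat.mod_eq_of_lt hi]
  apply Nat.card_congr
  refine Equiv.symm ⟨fun x => ⟨(x.1.1, x.1.2.1, i + g * x.1.2.2), ?_⟩,
    fun x => ⟨(x.1.1, x.1.2.1, x.1.2.2 / g), ?_⟩, ?_, ?_⟩
  · obtain ⟨⟨x₁, x₂, t⟩, hx⟩ := x
    simp only [hag, hbg] at hx
    simp only [hnm, haZ, hbZ]
    push_cast
    linear_combination (g : ℤ) * hx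
  · obtain ⟨⟨x₁, x₂, y⟩, hx⟩ := x
    have hy := key _ hx
    simp only at hy ⊢
    have hyd : y = i + g * (y / g) := by
      nth_rewrite 1 [← Nat.mod_add_div y g]; rw [hy]
    have hydZ : (y : ℤ) = i + g * ((y / g : ℕ) : ℤ) := by exact_mod_cast hyd
    rw [hnm, haZ, hbZ, hydZ] at hx
    simp only [hag, hbg]
    have h2 : (g : ℤ) * ((a' : ℤ) * x₁ + b' * x₂ + c * ((y / g : ℕ) : ℤ)) = g * m := by
      linear_combination hx
    have := mul_left_cancel₀ (ne_of_gt hgZ) h2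
    linarith
  · rintro ⟨⟨x₁, x₂, t⟩, hx⟩
    apply Subtype.ext
    show (x₁, x₂, (i + g * t) / g) = (x₁, x₂, t)
    have : (i + g * t) / g = t := by
      rw [Nat.add_mul_div_left _ _ hg, Nat.div_eq_of_lt hi, Nat.zero_add]
    rw [this]
  · rintro ⟨⟨x₁, x₂, y⟩, hx⟩
    have hy := key _ hx
    apply Subtype.ext
    show (x₁, x₂, i + g * (y / g)) = (x₁, x₂, y)
    have hy' : y % g = i := hy
    have : i + g * (y / g) = y := by
      conv_rhs => rw [← Nat.mod_add_div y g, hy']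
    rw [this]
end

section
/- Let a, b, c be positive integers with gcd(a, b, c) = 1, and set g₁ = gcd(b, c), g₂ = gcd(a, c), g₃ = gcd(a, b) (these are pairwise coprime, g₂·g₃ divides a, g₁·g₃ divides b, and g₁·g₂ divides c). Let i, j, k be natural numbers with i < g₃, j < g₂, k < g₁ and i·c ≡ n (mod g₃), j·b ≡ n (mod g₂), k·a ≡ n (mod g₁), and let n and m be integers with n = i·c + j·b + k·a + g₁·g₂·g₃·m. Then the number of triples (x₁, x₂, x₃) ∈ ℕ³ with a·x₁ + b·x₂ + c·x₃ = n equals the number of triples (x₁, x₂, x₃) ∈ ℕ³ with (a/(g₂g₃))·x₁ + (b/(g₁g₃))·x₂ + (c/(g₁g₂))·x₃ = m. -/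
/-!
Since g₁ = gcd(b, c) divides b and c and is coprime to a, every solution satisfies
a·x₁ ≡ n ≡ k·a (mod g₁), hence x₁ ≡ k (mod g₁); as k < g₁ this means x₁ = k + g₁·y₁ with
y₁ ∈ ℕ, and likewise x₂ = j + g₂·y₂, x₃ = i + g₃·y₃. This substitution is a bijection of
solution sets and turns the equation into a·g₁·y₁ + b·g₂·y₂ + c·g₃·y₃ = g₁g₂g₃·m. The gᵢ are
pairwise coprime, so g₂g₃ ∣ a, g₁g₃ ∣ b, g₁g₂ ∣ c, and dividing by g₁g₂g₃ gives the reduced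
equation.
-/

/-- `d(n; a, b, c)` for integer weights. `Nat.card` is `0` on infinite sets, so this is only
meaningful when the solution set is finite, e.g. for positive weights. -/
noncomputable def denumerant (n a b c : ℤ) : ℕ :=
  Nat.card {x : ℕ × ℕ × ℕ // a * x.1 + b * x.2.1 + c * x.2.2 = n}

theorem denumerant_mul_left {d : ℤ} (hd : d ≠ 0) (n a b c : ℤ) :
    denumerant (d * n) (d * a) (d * b) (d * c) = denumerant n a b c :=
  Nat.card_congr <| Equiv.subtypeEquivRight fun x => by
    simp only [mul_assoc, ← mul_add]
    exact mul_right_inj' hd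

theorem Nat.add_mul_div_left_of_lt {r g : ℕ} (y : ℕ) (h : r < g) : (r + g * y) / g = y := by
  rw [Nat.add_mul_div_left _ _ (by omega), Nat.div_eq_of_lt h, zero_add]

theorem Nat.add_mul_div_eq_of_mod_eq {x g r : ℕ} (h : x % g = r) : r + g * (x / g) = x :=
  h ▸ Nat.mod_add_div x g

theorem denumerant_eq_of_forall_mod_eq {n a b c : ℤ} {g₁ g₂ g₃ r₁ r₂ r₃ : ℕ}
    (h₁ : r₁ < g₁) (h₂ : r₂ < g₂) (h₃ : r₃ < g₃)
    (hres : ∀ x : ℕ × ℕ × ℕ, a * x.1 + b * x.2.1 + c * x.2.2 = n →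
      x.1 % g₁ = r₁ ∧ x.2.1 % g₂ = r₂ ∧ x.2.2 % g₃ = r₃) :
    denumerant n a b c =
      denumerant (n - a * r₁ - b * r₂ - c * r₃) (a * g₁) (b * g₂) (c * g₃) := by
  refine Nat.card_congr
    { toFun := fun x => ⟨(x.1.1 / g₁, x.1.2.1 / g₂, x.1.2.2 / g₃), ?_⟩
      invFun := fun y => ⟨(r₁ + g₁ * y.1.1, r₂ + g₂ * y.1.2.1, r₃ + g₃ * y.1.2.2), ?_⟩
      left_inv := fun x => ?_
      right_inv := fun y => ?_ }
  · obtain ⟨⟨x₁, x₂, x₃⟩, hx⟩ := x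
    obtain ⟨e₁, e₂, e₃⟩ := hres _ hx
    rw [← Nat.add_mul_div_eq_of_mod_eq e₁, ← Nat.add_mul_div_eq_of_mod_eq e₂,
      ← Nat.add_mul_div_eq_of_mod_eq e₃] at hx
    push_cast at hx ⊢
    linear_combination hx
  · obtain ⟨⟨y₁, y₂, y₃⟩, hy⟩ := y
    push_cast
    linear_combination hy
  · obtain ⟨e₁, e₂, e₃⟩ := hres _ x.2
    simp only [Nat.add_mul_div_eq_of_mod_eq, e₁, e₂, e₃]
  · simp only [Nat.add_mul_div_left_of_lt, h₁, h₂, h₃]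

theorem mod_eq_of_mul_add_mul_add_mul_eq {n : ℤ} {a b c g r x y z : ℕ}
    (ha : Nat.Coprime g a) (hb : g ∣ b) (hc : g ∣ c) (hr : r < g)
    (hra : (r * a : ℤ) ≡ n [ZMOD g]) (h : (a : ℤ) * x + b * y + c * z = n) : x % g = r := by
  have hbc : (g : ℤ) ∣ b * y + c * z :=
    dvd_add ((Int.natCast_dvd_natCast.mpr hb).mul_right _)
      ((Int.natCast_dvd_natCast.mpr hc).mul_right _)
  have hdvd : (g : ℤ) ∣ a * (x - r) := by
    rw [show (a : ℤ) * (x - r) = (n - r * a) - (b * y + c * z) by linear_combination h]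
    exact hra.dvd.sub hbc
  have hmod : r ≡ x [MOD g] :=
    Nat.modEq_iff_dvd.mpr ((Nat.isCoprime_iff_coprime.mpr ha).dvd_of_dvd_mul_left hdvd)
  rw [← hmod, Nat.mod_eq_of_lt hr]

theorem denumerant_mul_eq_denumerant_div {a b c g₁ g₂ g₃ : ℕ}
    (h₁ : 0 < g₁) (h₂ : 0 < g₂) (h₃ : 0 < g₃)
    (ha : g₂ * g₃ ∣ a) (hb : g₁ * g₃ ∣ b) (hc : g₁ * g₂ ∣ c) (m : ℤ) :
    denumerant (g₁ * g₂ * g₃ * m) (a * g₁) (b * g₂) (c * g₃) =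
      denumerant m (a / (g₂ * g₃) : ℕ) (b / (g₁ * g₃) : ℕ) (c / (g₁ * g₂) : ℕ) := by
  obtain ⟨a', rfl⟩ := ha
  obtain ⟨b', rfl⟩ := hb
  obtain ⟨c', rfl⟩ := hc
  have hG : (g₁ * g₂ * g₃ : ℤ) ≠ 0 := by positivity
  rw [Nat.mul_div_cancel_left _ (by positivity), Nat.mul_div_cancel_left _ (by positivity),
    Nat.mul_div_cancel_left _ (by positivity), ← denumerant_mul_left hG m]
  congr 1 <;> push_cast <;> ring

theorem denumerant_reduction_pairwise_coprime_general (a b c : ℕ)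
    (habc : Nat.gcd (Nat.gcd a b) c = 1) (n m : ℤ) (i j k : ℕ)
    (hi : i < Nat.gcd a b) (hj : j < Nat.gcd a c) (hk : k < Nat.gcd b c)
    (hicong : (i * c : ℤ) ≡ n [ZMOD (Nat.gcd a b : ℤ)])
    (hjcong : (j * b : ℤ) ≡ n [ZMOD (Nat.gcd a c : ℤ)])
    (hkcong : (k * a : ℤ) ≡ n [ZMOD (Nat.gcd b c : ℤ)])
    (hnm : n = i * c + j * b + k * a +
      (Nat.gcd b c : ℤ) * (Nat.gcd a c : ℤ) * (Nat.gcd a b : ℤ) * m) :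
    Nat.card {x : ℕ × ℕ × ℕ //
        (a : ℤ) * x.1 + (b : ℤ) * x.2.1 + (c : ℤ) * x.2.2 = n} =
      Nat.card {x : ℕ × ℕ × ℕ //
        ((a / (Nat.gcd a c * Nat.gcd a b) : ℕ) : ℤ) * x.1 +
          ((b / (Nat.gcd b c * Nat.gcd a b) : ℕ) : ℤ) * x.2.1 +
          ((c / (Nat.gcd b c * Nat.gcd a c) : ℕ) : ℤ) * x.2.2 = m} := by
  set g₁ := Nat.gcd b c
  set g₂ := Nat.gcd a c
  set g₃ := Nat.gcd a b
  have h₁ : Nat.Coprime g₁ a := by rwa [Nat.Coprime, Nat.gcd_comm g₁ a, ← Nat.gcd_assoc]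
  have h₂ : Nat.Coprime g₂ b := by rwa [Nat.Coprime, Nat.gcd_right_comm]
  have h₃ : Nat.Coprime g₃ c := habc
  have hres : ∀ x : ℕ × ℕ × ℕ, (a : ℤ) * x.1 + (b : ℤ) * x.2.1 + (c : ℤ) * x.2.2 = n →
      x.1 % g₁ = k ∧ x.2.1 % g₂ = j ∧ x.2.2 % g₃ = i := fun x hx =>
    ⟨mod_eq_of_mul_add_mul_add_mul_eq h₁ (Nat.gcd_dvd_left b c) (Nat.gcd_dvd_right b c)
        hk hkcong hx,
      mod_eq_of_mul_add_mul_add_mul_eq (y := x.1) (z := x.2.2) h₂ (Nat.gcd_dvd_left a c)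
        (Nat.gcd_dvd_right a c) hj hjcong (by linear_combination hx),
      mod_eq_of_mul_add_mul_add_mul_eq (y := x.1) (z := x.2.1) h₃ (Nat.gcd_dvd_left a b)
        (Nat.gcd_dvd_right a b) hi hicong (by linear_combination hx)⟩
  have h₁₂ : Nat.Coprime g₁ g₂ := h₁.coprime_dvd_right (Nat.gcd_dvd_left a c)
  have h₁₃ : Nat.Coprime g₁ g₃ := h₁.coprime_dvd_right (Nat.gcd_dvd_left a b)
  have h₂₃ : Nat.Coprime g₂ g₃ := h₂.coprime_dvd_right (Nat.gcd_dvd_right a b)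
  have hn : n - a * k - b * j - c * i = g₁ * g₂ * g₃ * m := by linear_combination hnm
  show denumerant n a b c = _
  rw [denumerant_eq_of_forall_mod_eq hk hj hi hres, hn]
  exact denumerant_mul_eq_denumerant_div (by omega) (by omega) (by omega)
    (h₂₃.mul_dvd_of_dvd_of_dvd (Nat.gcd_dvd_left a c) (Nat.gcd_dvd_left a b))
    (h₁₃.mul_dvd_of_dvd_of_dvd (Nat.gcd_dvd_left b c) (Nat.gcd_dvd_right a b))
    (h₁₂.mul_dvd_of_dvd_of_dvd (Nat.gcd_dvd_right b c) (Nat.gcd_dvd_right a c)) m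

/-- Let `gcd(a,b,c) = 1`, `g₁ = gcd(b,c)`, `g₂ = gcd(a,c)`, `g₃ = gcd(a,b)`.
If `i < g₃`, `j < g₂`, `k < g₁` satisfy `i*c ≡ n (mod g₃)`, `j*b ≡ n (mod g₂)`,
`k*a ≡ n (mod g₁)`, and `n = i*c + j*b + k*a + g₁*g₂*g₃*m`, then
`d(n; a, b, c) = d(m; a/(g₂g₃), b/(g₁g₃), c/(g₁g₂))`. -/
theorem denumerant_reduction_pairwise_coprime (a b c : ℕ)
    (ha : 0 < a) (hb : 0 < b) (hc : 0 < c)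
    (habc : Nat.gcd (Nat.gcd a b) c = 1) (n m : ℤ) (i j k : ℕ)
    (hi : i < Nat.gcd a b) (hj : j < Nat.gcd a c) (hk : k < Nat.gcd b c)
    (hicong : (i * c : ℤ) ≡ n [ZMOD (Nat.gcd a b : ℤ)])
    (hjcong : (j * b : ℤ) ≡ n [ZMOD (Nat.gcd a c : ℤ)])
    (hkcong : (k * a : ℤ) ≡ n [ZMOD (Nat.gcd b c : ℤ)])
    (hnm : n = i * c + j * b + k * a +
      (Nat.gcd b c : ℤ) * (Nat.gcd a c : ℤ) * (Nat.gcd a b : ℤ) * m) :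
    Nat.card {x : ℕ × ℕ × ℕ //
        (a : ℤ) * x.1 + (b : ℤ) * x.2.1 + (c : ℤ) * x.2.2 = n} =
      Nat.card {x : ℕ × ℕ × ℕ //
        ((a / (Nat.gcd a c * Nat.gcd a b) : ℕ) : ℤ) * x.1 +
          ((b / (Nat.gcd b c * Nat.gcd a b) : ℕ) : ℤ) * x.2.1 +
          ((c / (Nat.gcd b c * Nat.gcd a c) : ℕ) : ℤ) * x.2.2 = m} :=
  denumerant_reduction_pairwise_coprime_general a b c habc n m i j k hi hj hk hicong hjcong hkcong
    hnm
end

section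
/- Let h₁, h₂, h₃, h₄ be rational numbers with h₁ ≠ 0 and h₂ ≠ 0. In the field of formal Laurent series ℚ((s)), consider the element (e^{h₃ s} - e^{h₄ s}) / ((1 - e^{h₁ s})·(1 - e^{h₂ s})), where e^{h s} denotes the formal power series ∑_{n ≥ 0} hⁿ sⁿ / n! regarded as a Laurent series, and the division is taken in the field ℚ((s)) (the denominator is nonzero since h₁, h₂ ≠ 0). Then the coefficient of s^0 of this Laurent series equals (h₄ - h₃)·(h₁ + h₂ - h₃ - h₄) / (2·h₁·h₂). -/
/-!
Each of `e^{h₃ s} - e^{h₄ s}`, `1 - e^{h₁ s}`, `1 - e^{h₂ s}` is `s` times a power series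
(`1 = e^{0 s}`), so the fraction is `s⁻¹ V / U` with power series `V`, `U` and
`U(0) = h₁ h₂ ≠ 0`. Its constant term is the coefficient of `s` in `V / U`, which only involves
the first two coefficients of `V` and `U`.
-/

open PowerSeries

namespace PowerSeries

section Exp

variable {A : Type*} [CommRing A] [Algebra ℚ A]

/-- The power series `(e^{a s} - e^{b s}) / s`. -/
noncomputable def expSubDivX (a b : A) : A⟦X⟧ :=
  mk fun n => ((n + 1).factorial : ℚ)⁻¹ • (a ^ (n + 1) - b ^ (n + 1))

@[simp]
theorem coeff_expSubDivX (a b : A) (n : ℕ) :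
    coeff n (expSubDivX a b) = ((n + 1).factorial : ℚ)⁻¹ • (a ^ (n + 1) - b ^ (n + 1)) :=
  coeff_mk _ _

@[simp]
theorem constantCoeff_expSubDivX (a b : A) : constantCoeff (expSubDivX a b) = a - b := by
  simp [← coeff_zero_eq_constantCoeff_apply]

theorem coeff_one_expSubDivX (a b : A) :
    coeff 1 (expSubDivX a b) = (2 : ℚ)⁻¹ • (a ^ 2 - b ^ 2) := by
  simp

theorem rescale_exp_sub_rescale_exp (a b : A) :
    rescale a (exp A) - rescale b (exp A) = X * expSubDivX a b := by
  ext (_ | n)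
  · rw [map_sub, coeff_rescale, coeff_rescale, coeff_zero_X_mul]
    ring
  · simp [coeff_succ_X_mul, coeff_rescale, coeff_exp, Algebra.smul_def, mul_comm, sub_mul]

theorem one_sub_rescale_exp (a : A) : 1 - rescale a (exp A) = X * expSubDivX 0 a := by
  rw [← rescale_exp_sub_rescale_exp, rescale_zero_apply, constantCoeff_exp, map_one]

end Exp

theorem coeff_one_mul_inv {K : Type*} [Field K] (f g : K⟦X⟧) (hg : constantCoeff g ≠ 0) :
    coeff 1 (f * g⁻¹) =
      (coeff 1 f * constantCoeff g - constantCoeff f * coeff 1 g) / constantCoeff g ^ 2 := by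
  have hq : f * g⁻¹ * g = f := by rw [mul_assoc, PowerSeries.inv_mul_cancel g hg, mul_one]
  have h0 := congrArg constantCoeff hq
  have h1 := congrArg (coeff 1) hq
  rw [map_mul] at h0
  rw [coeff_one_mul] at h1
  field_simp
  rw [← h0, ← h1]
  ring

end PowerSeries

namespace LaurentSeries

variable {K : Type*} [Field K]

theorem coeff_coe_div_coe_X_pow_mul (f g : K⟦X⟧) (hg : constantCoeff g ≠ 0) (m n : ℕ) :
    HahnSeries.coeff ((f : K⸨X⸩) / ((X ^ n * g : K⟦X⟧) : K⸨X⸩)) m =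
      coeff (m + n) (f * g⁻¹) := by
  have hg' : ((X ^ n * g : K⟦X⟧) : K⸨X⸩) ≠ 0 := by
    rw [Ne, ← coe_zero, HahnSeries.ofPowerSeries_injective.eq_iff]
    exact mul_ne_zero (pow_ne_zero _ X_ne_zero) (ne_of_apply_ne constantCoeff (by simpa using hg))
  have hdiv : (f : K⸨X⸩) / ((X ^ n * g : K⟦X⟧) : K⸨X⸩) =
      HahnSeries.single (-n : ℤ) 1 * ((f * g⁻¹ : K⟦X⟧) : K⸨X⸩) := by
    rw [div_eq_iff hg']
    calc (f : K⸨X⸩)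
        = HahnSeries.single (-n : ℤ) (1 : K) * HahnSeries.single (n : ℤ) 1 * (f : K⸨X⸩) *
            ((g⁻¹ * g : K⟦X⟧) : K⸨X⸩) := by
          rw [HahnSeries.single_mul_single, neg_add_cancel, mul_one, HahnSeries.single_zero_one,
            one_mul, PowerSeries.inv_mul_cancel g hg, coe_one, mul_one]
      _ = _ := by
          rw [coe_mul, coe_mul, coe_mul, HahnSeries.ofPowerSeries_X_pow]
          ring
  rw [hdiv, ← coeff_coe_powerSeries, Nat.cast_add, ← sub_neg_eq_add, HahnSeries.coeff_single_mul,
    one_mul]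

end LaurentSeries

open LaurentSeries

/-- For rational `h₁, h₂, h₃, h₄` with `h₁ ≠ 0` and `h₂ ≠ 0`, the constant
term (coefficient of `s ^ 0`) of the formal Laurent series
`(e^{h₃ s} - e^{h₄ s}) / ((1 - e^{h₁ s}) * (1 - e^{h₂ s}))`
equals `(h₄ - h₃) * (h₁ + h₂ - h₃ - h₄) / (2 * h₁ * h₂)`. Here `e^{h s}` is the exponential
power series `∑ hⁿ sⁿ / n!`, i.e. `rescale h (exp ℚ)`, viewed as a Laurent series. -/
theorem constant_term_exp_fraction (h₁ h₂ h₃ h₄ : ℚ) (H₁ : h₁ ≠ 0) (H₂ : h₂ ≠ 0) :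
    HahnSeries.coeff
      (((rescale h₃ (exp ℚ) : PowerSeries ℚ) - (rescale h₄ (exp ℚ) : PowerSeries ℚ) :
          LaurentSeries ℚ) /
        ((1 - ((rescale h₁ (exp ℚ) : PowerSeries ℚ) : LaurentSeries ℚ)) *
          (1 - ((rescale h₂ (exp ℚ) : PowerSeries ℚ) : LaurentSeries ℚ))))
      0 =
    (h₄ - h₃) * (h₁ + h₂ - h₃ - h₄) / (2 * h₁ * h₂) := by
  set U := expSubDivX 0 h₁ * expSubDivX 0 h₂
  have hU0 : constantCoeff U = h₁ * h₂ := by simp [U]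
  have hU1 : coeff 1 U = h₁ * h₂ * (h₁ + h₂) / 2 := by
    simp only [U, coeff_one_mul, coeff_one_expSubDivX, constantCoeff_expSubDivX, smul_eq_mul]
    ring
  have hU : constantCoeff U ≠ 0 := hU0 ▸ mul_ne_zero H₁ H₂
  have hden : X * expSubDivX 0 h₁ * (X * expSubDivX 0 h₂) = X ^ 2 * U := by ring
  rw [← map_one (HahnSeries.ofPowerSeries ℤ ℚ), ← map_sub, ← map_sub, ← map_sub, ← map_mul,
    one_sub_rescale_exp, one_sub_rescale_exp, rescale_exp_sub_rescale_exp, hden,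
    ← Nat.cast_zero (R := ℤ), coeff_coe_div_coe_X_pow_mul _ _ hU, zero_add, mul_assoc,
    coeff_succ_X_mul, coeff_one_mul_inv _ _ hU, hU0, hU1, coeff_one_expSubDivX,
    constantCoeff_expSubDivX, smul_eq_mul]
  field_simp
  ring
end
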